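/- arXiv:1508.03643 — 5 statements merged into one kernel-verified Lean document; each statement's English description precedes it below -/
import Mathlib

section
/- For integers a, b with gcd(a,b)=1, not both zero, and any positive integer t, the number of lattice points (x,y) in Z^2 such that both ax+by and ay-bx lie in the interval [1, t(a^2+b^2)-1] equals (a^2+b^2)t^2 - 2t + 1. -/
/-!
Identify `(x, y)` with the Gaussian integer `x + y i`. Then `(x, y) ↦ (ax + by, ay - bx)` is
multiplication by `a - b i`; it is injective, and since `gcd(a, b) = 1` its image is
`{(u, v) : N ∣ au - bv}` with `N = a² + b²`. For fixed `v` these `u` form a single residue class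
modulo `N`, which meets `(0, tN)` in `t` points, or in `t - 1` when it is the class of `0`, i.e.
when `N ∣ v`. Summing over `v ∈ (0, tN)` gives `(tN - 1) t - (t - 1) = N t² - 2t + 1`.
-/

open Finset

theorem IsCoprime.sq_add_sq_pos {a b : ℤ} (h : IsCoprime a b) : 0 < a ^ 2 + b ^ 2 := by
  have hne : a ≠ 0 ∨ b ≠ 0 := by
    by_contra! h0
    exact not_isCoprime_zero_zero (h0.1 ▸ h0.2 ▸ h)
  rcases hne with ha | hb <;> positivity

theorem IsCoprime.sq_add_sq_right {a b : ℤ} (h : IsCoprime a b) :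
    IsCoprime a (a ^ 2 + b ^ 2) := by
  rw [show a ^ 2 + b ^ 2 = b ^ 2 + a * a by ring]
  exact (h.pow_right (n := 2)).add_mul_left_right a

/-- Multiplication by `a - b i`, writing the Gaussian integer `x + y i` as `(x, y)`. -/
def gaussMul (a b : ℤ) (p : ℤ × ℤ) : ℤ × ℤ := (a * p.1 + b * p.2, a * p.2 - b * p.1)

theorem gaussMul_injective {a b : ℤ} (h : a ^ 2 + b ^ 2 ≠ 0) :
    Function.Injective (gaussMul a b) := by
  rintro ⟨x, y⟩ ⟨x', y'⟩ he
  simp only [gaussMul, Prod.mk.injEq] at he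
  obtain ⟨h1, h2⟩ := he
  refine Prod.ext (mul_left_cancel₀ h ?_) (mul_left_cancel₀ h ?_)
  · linear_combination a * h1 - b * h2
  · linear_combination b * h1 + a * h2

theorem mem_range_gaussMul_iff {a b : ℤ} (h : IsCoprime a b) (q : ℤ × ℤ) :
    q ∈ Set.range (gaussMul a b) ↔ a ^ 2 + b ^ 2 ∣ a * q.1 - b * q.2 := by
  obtain ⟨u, v⟩ := q
  constructor
  · rintro ⟨⟨x, y⟩, hxy⟩
    simp only [gaussMul, Prod.mk.injEq] at hxy
    exact ⟨x, by rw [← hxy.1, ← hxy.2]; ring⟩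
  · rintro ⟨x, hx⟩
    -- `a (bu + av) = b (au - bv) + (a² + b²) v`
    have hy : a ^ 2 + b ^ 2 ∣ b * u + a * v := by
      refine h.sq_add_sq_right.symm.dvd_of_dvd_mul_left ⟨b * x + v, ?_⟩
      linear_combination b * hx
    obtain ⟨y, hy⟩ := hy
    have hN := h.sq_add_sq_pos.ne'
    refine ⟨(x, y), Prod.ext (mul_left_cancel₀ hN ?_) (mul_left_cancel₀ hN ?_)⟩
    · simp only [gaussMul]; linear_combination -a * hx - b * hy
    · simp only [gaussMul]; linear_combination b * hx - a * hy

theorem Int.card_Ico_add_mul_filter_modEq {r : ℤ} (hr : 0 < r) (c v : ℤ) (t : ℕ) :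
    (#{x ∈ Ico c (c + t * r) | x ≡ v [ZMOD r]} : ℤ) = t := by
  have hsplit : (((c + t * r : ℤ) : ℚ) - v) / r = (c - v) / (r : ℚ) + (t : ℤ) := by
    push_cast; field_simp; ring
  rw [Int.Ico_filter_modEq_card _ _ hr, hsplit, Int.ceil_add_intCast]
  simp

theorem Int.card_Ioo_filter_modEq {r : ℤ} (hr : 0 < r) (v : ℤ) {t : ℕ} (ht : 0 < t) :
    (#{x ∈ Ioo 0 (t * r) | x ≡ v [ZMOD r]} : ℤ) = t - if r ∣ v then 1 else 0 := by
  have hIco := Int.card_Ico_add_mul_filter_modEq hr 0 v t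
  rw [zero_add, ← Finset.Ioo_insert_left (by positivity), filter_insert] at hIco
  have h0 : (0 ≡ v [ZMOD r]) ↔ r ∣ v := by simp [Int.modEq_iff_dvd]
  by_cases hv : r ∣ v
  · rw [if_pos (h0.mpr hv), card_insert_of_notMem (by simp)] at hIco
    rw [if_pos hv]; push_cast at hIco; linarith
  · rw [if_neg (mt h0.mp hv)] at hIco
    rw [if_neg hv, hIco, sub_zero]

theorem card_Ioo_filter_dvd_mul_sub {a N : ℤ} (hN : 0 < N) (ha : IsCoprime a N) (w : ℤ)
    {t : ℕ} (ht : 0 < t) :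
    (#{u ∈ Ioo 0 (t * N) | N ∣ a * u - w} : ℤ) = t - if N ∣ w then 1 else 0 := by
  obtain ⟨p, q, hpq⟩ := ha
  have hp : IsCoprime p N := ⟨a, q, by linear_combination hpq⟩
  have hsol : ∀ u, N ∣ a * u - w ↔ u ≡ p * w [ZMOD N] := by
    intro u
    rw [Int.modEq_iff_dvd]
    constructor <;> rintro ⟨k, hk⟩
    · exact ⟨-p * k - q * u, by linear_combination -p * hk + u * hpq⟩
    · exact ⟨-a * k - q * w, by linear_combination -a * hk + w * hpq⟩
  have hpw : N ∣ p * w ↔ N ∣ w := ⟨hp.symm.dvd_of_dvd_mul_left, fun h => h.mul_left p⟩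
  rw [filter_congr fun u _ => hsol u, Int.card_Ioo_filter_modEq hN _ ht]
  simp only [hpw]

theorem card_filter_dvd_sq_add_sq {a b : ℤ} (h : IsCoprime a b) {t : ℕ} (ht : 0 < t) :
    (#{q ∈ Ioo 0 (t * (a ^ 2 + b ^ 2)) ×ˢ Ioo 0 (t * (a ^ 2 + b ^ 2)) |
        a ^ 2 + b ^ 2 ∣ a * q.1 - b * q.2} : ℤ) = (a ^ 2 + b ^ 2) * t ^ 2 - 2 * t + 1 := by
  set N := a ^ 2 + b ^ 2
  have hN : 0 < N := h.sq_add_sq_pos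
  have hbN : IsCoprime b N := by simpa only [N, add_comm (b ^ 2)] using h.symm.sq_add_sq_right
  have hbv (v : ℤ) : N ∣ b * v ↔ N ∣ v :=
    ⟨hbN.symm.dvd_of_dvd_mul_left, fun h => h.mul_left b⟩
  have hmultiples := Int.card_Ioo_filter_modEq hN 0 ht
  simp only [Int.modEq_zero_iff_dvd, dvd_zero, if_true] at hmultiples
  calc (#{q ∈ Ioo 0 (t * N) ×ˢ Ioo 0 (t * N) | N ∣ a * q.1 - b * q.2} : ℤ)
      = ∑ v ∈ Ioo 0 (t * N), (#{u ∈ Ioo 0 (t * N) | N ∣ a * u - b * v} : ℤ) := by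
        rw [← Nat.cast_sum, card_filter, sum_product_right]
        simp only [card_filter]
    _ = ∑ v ∈ Ioo 0 (t * N), ((t : ℤ) - if N ∣ v then 1 else 0) := by
        refine sum_congr rfl fun v _ => ?_
        rw [card_Ioo_filter_dvd_mul_sub hN h.sq_add_sq_right _ ht]
        simp only [hbv]
    _ = (t * N - 1) * t - (t - 1) := by
        rw [sum_sub_distrib, sum_const, sum_boole, hmultiples, Int.card_Ioo]
        have htN : 0 < (t : ℤ) * N := mul_pos (by exact_mod_cast ht) hN
        rw [sub_zero, nsmul_eq_mul, Int.toNat_of_nonneg (by linarith)]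
    _ = N * t ^ 2 - 2 * t + 1 := by ring

theorem stmt_0_general (a b : ℤ) (h : Int.gcd a b = 1) (t : ℕ) (ht : 0 < t) :
    ({p : ℤ × ℤ | a * p.1 + b * p.2 ∈ Set.Icc 1 ((t : ℤ) * (a ^ 2 + b ^ 2) - 1) ∧
        a * p.2 - b * p.1 ∈ Set.Icc 1 ((t : ℤ) * (a ^ 2 + b ^ 2) - 1)}.ncard : ℤ)
      = (a ^ 2 + b ^ 2) * (t : ℤ) ^ 2 - 2 * t + 1 := by
  have hab : IsCoprime a b := Int.isCoprime_iff_gcd_eq_one.mpr h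
  have hbox : {p : ℤ × ℤ | a * p.1 + b * p.2 ∈ Set.Icc 1 ((t : ℤ) * (a ^ 2 + b ^ 2) - 1) ∧
        a * p.2 - b * p.1 ∈ Set.Icc 1 ((t : ℤ) * (a ^ 2 + b ^ 2) - 1)} =
      gaussMul a b ⁻¹' ↑(Ioo 0 (t * (a ^ 2 + b ^ 2)) ×ˢ Ioo 0 (t * (a ^ 2 + b ^ 2))) := by
    ext p
    simp only [gaussMul, Set.mem_ofPred_eq, Set.mem_Icc, Set.mem_preimage, coe_product, coe_Ioo,
      Set.mem_prod, Set.mem_Ioo]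
    omega
  rw [hbox, ← Set.ncard_image_of_injective _ (gaussMul_injective hab.sq_add_sq_pos.ne'),
    Set.image_preimage_eq_inter_range, ← card_filter_dvd_sq_add_sq hab ht,
    ← Set.ncard_coe_finset]
  congr
  ext q
  simp [mem_range_gaussMul_iff hab]

theorem stmt_0 (a b : ℤ) (h : Int.gcd a b = 1) (hab : ¬(a = 0 ∧ b = 0)) (t : ℕ) (ht : 0 < t) :
    ({p : ℤ × ℤ | a * p.1 + b * p.2 ∈ Set.Icc 1 ((t : ℤ) * (a ^ 2 + b ^ 2) - 1) ∧
        a * p.2 - b * p.1 ∈ Set.Icc 1 ((t : ℤ) * (a ^ 2 + b ^ 2) - 1)}.ncard : ℤ)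
      = (a ^ 2 + b ^ 2) * (t : ℤ) ^ 2 - 2 * t + 1 :=
  stmt_0_general a b h t ht
end

section
/- Every primitive solution (n_1, n_2, n_3, ℓ) of n_1^2 + n_2^2 + n_3^2 = ℓ^2 with gcd(n_1,n_2,n_3)=1 is, after permuting the n_i and changing signs, of the form n_1 = 2(zy - tx), n_2 = 2(tz + yx), n_3 = z^2 - t^2 + x^2 - y^2, ℓ = x^2 + y^2 + z^2 + t^2 for some integers x, y, z, t. -/
/-!
Modulo 4, at most one of `n₀, n₁, n₂` is odd, so after a permutation `a = n₀` and `b = n₁` are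
even. Then `ℓ ≡ c := n₂ (mod 2)` and `((ℓ + c)/2) ((ℓ - c)/2) = N(a/2 + (b/2) i)` in `ℤ[i]`.
Primitivity lets one split `a/2 + (b/2) i = (z + x i)(y + t i)` with norms `(ℓ + c)/2` and
`(ℓ - c)/2`: peel off, one rational prime `p ∣ (ℓ + c)/2` at a time, either a Gaussian prime of
norm `p` (when `p ≢ 3 mod 4`) or `p` itself (when `p ≡ 3 mod 4`, since then `p` is inert and
cannot divide `(ℓ - c)/2`). Comparing real parts, imaginary parts and norms gives the formulas.
-/

open Zsqrtd

local notation "ℤ[i]" => GaussianInt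

namespace GaussianInt

theorem star_dvd_of_dvd_star {a b : ℤ[i]} (h : a ∣ star b) : star a ∣ b := by
  have := map_dvd (starRingEnd ℤ[i]) h
  rwa [starRingEnd_apply, starRingEnd_apply, star_star] at this

theorem prime_of_natAbs_norm_prime {π : ℤ[i]} (hπ : π.norm.natAbs.Prime) : Prime π := by
  refine irreducible_iff_prime.1 ⟨fun hu => hπ.ne_one (norm_eq_one_iff.2 hu), fun a b hab => ?_⟩
  rw [hab, norm_mul, Int.natAbs_mul, Nat.prime_mul_iff] at hπ
  rcases hπ with ⟨-, hb⟩ | ⟨-, ha⟩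
  · exact Or.inr (norm_eq_one_iff.1 hb)
  · exact Or.inl (norm_eq_one_iff.1 ha)

theorem natCast_dvd_mul_star_of_dvd_norm {p : ℕ} {α : ℤ[i]} (h : (p : ℤ) ∣ α.norm) :
    (p : ℤ[i]) ∣ α * star α := by
  rw [← norm_eq_mul_conj, ← Int.cast_natCast]
  exact (intCast_dvd_intCast _ _).2 h

theorem natCast_dvd_of_dvd_norm {p : ℕ} [Fact p.Prime] (hp3 : p % 4 = 3) {α : ℤ[i]}
    (h : (p : ℤ) ∣ α.norm) : (p : ℤ[i]) ∣ α := by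
  rcases (prime_of_nat_prime_of_mod_four_eq_three p hp3).dvd_or_dvd
    (natCast_dvd_mul_star_of_dvd_norm h) with h | h
  · exact h
  · simpa using star_dvd_of_dvd_star h

theorem exists_norm_eq_dvd_of_dvd_norm {p : ℕ} [hp : Fact p.Prime] (hp3 : p % 4 ≠ 3)
    {α : ℤ[i]} (h : (p : ℤ) ∣ α.norm) : ∃ ϖ : ℤ[i], ϖ.norm = p ∧ ϖ ∣ α := by
  obtain ⟨a, b, hab⟩ := Nat.Prime.sq_add_sq hp3
  set π : ℤ[i] := ⟨a, b⟩
  have hπ : π.norm = p := by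
    rw [norm_def, ← hab]; push_cast; ring
  have hπp : π ∣ (p : ℤ[i]) := ⟨star π, by rw [← norm_eq_mul_conj, hπ, Int.cast_natCast]⟩
  have hπprime : Prime π :=
    prime_of_natAbs_norm_prime (by rw [hπ, Int.natAbs_natCast]; exact hp.out)
  rcases hπprime.dvd_or_dvd (hπp.trans (natCast_dvd_mul_star_of_dvd_norm h)) with h | h
  · exact ⟨π, hπ, h⟩
  · exact ⟨star π, by rw [norm_conj, hπ], star_dvd_of_dvd_star h⟩

theorem exists_factor_of_prime_dvd {u v p : ℕ} {α : ℤ[i]} (hp : p.Prime) (hpu : p ∣ u)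
    (h : α.norm = u * v) (hprim : ∀ q : ℕ, q.Prime → q ∣ u → q ∣ v → ¬(q : ℤ[i]) ∣ α) :
    ∃ (ϖ α' : ℤ[i]) (d u' : ℕ), 1 < d ∧ ϖ.norm = d ∧ α = ϖ * α' ∧ u = d * u' := by
  have := Fact.mk hp
  have hpN : (p : ℤ) ∣ α.norm := h ▸ (Int.natCast_dvd_natCast.2 hpu).mul_right _
  by_cases hp3 : p % 4 = 3
  · obtain ⟨α', rfl⟩ := natCast_dvd_of_dvd_norm hp3 hpN
    have hpv : ¬p ∣ v := fun hpv => hprim p hp hpu hpv (dvd_mul_right _ _)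
    have hp2uv : p ^ 2 ∣ u * v := by
      refine Int.natCast_dvd_natCast.1 ⟨α'.norm, ?_⟩
      rw [Nat.cast_mul, ← h, norm_mul, norm_natCast]; push_cast; ring
    obtain ⟨u', rfl⟩ :=
      (Nat.Coprime.pow_left 2 (hp.coprime_iff_not_dvd.2 hpv)).dvd_of_dvd_mul_right hp2uv
    refine ⟨p, α', p ^ 2, u', Nat.one_lt_pow two_ne_zero hp.one_lt, ?_, rfl, rfl⟩
    rw [norm_natCast]; push_cast; ring
  · obtain ⟨ϖ, hϖ, α', rfl⟩ := exists_norm_eq_dvd_of_dvd_norm hp3 hpN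
    obtain ⟨u', rfl⟩ := hpu
    exact ⟨ϖ, α', p, u', hp.one_lt, hϖ, rfl, rfl⟩

theorem exists_factors_of_norm_eq_mul_of_ne_zero {u v : ℕ} (hu : u ≠ 0) {α : ℤ[i]}
    (h : α.norm = u * v) (hprim : ∀ p : ℕ, p.Prime → p ∣ u → p ∣ v → ¬(p : ℤ[i]) ∣ α) :
    ∃ A B : ℤ[i], α = A * B ∧ A.norm = u ∧ B.norm = v := by
  induction u using Nat.strong_induction_on generalizing α with
  | _ u ih =>
  rcases eq_or_ne u 1 with rfl | hu1
  · exact ⟨1, α, (one_mul α).symm, norm_one, by simpa using h⟩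
  obtain ⟨p, hp, hpu⟩ := Nat.exists_prime_and_dvd hu1
  obtain ⟨ϖ, α', d, u', hd, hϖ, rfl, rfl⟩ := exists_factor_of_prime_dvd hp hpu h hprim
  have hu' : u' ≠ 0 := right_ne_zero_of_mul hu
  have h' : α'.norm = u' * v := by
    rw [norm_mul, hϖ] at h
    push_cast at h
    exact mul_left_cancel₀ (by positivity) (h.trans (mul_assoc _ _ _))
  obtain ⟨A, B, rfl, hA, hB⟩ := ih u' (lt_mul_left (Nat.pos_of_ne_zero hu') hd) hu' h'
    fun q hq hqu hqv hqα => hprim q hq (hqu.mul_left d) hqv (hqα.mul_left ϖ)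
  exact ⟨ϖ * A, B, (mul_assoc _ _ _).symm, by rw [norm_mul, hϖ, hA]; push_cast; rfl, hB⟩

theorem exists_factors_of_norm_eq_mul {u v : ℕ} {α : ℤ[i]} (h : α.norm = u * v)
    (hprim : ∀ p : ℕ, p.Prime → p ∣ u → p ∣ v → ¬(p : ℤ[i]) ∣ α) :
    ∃ A B : ℤ[i], α = A * B ∧ A.norm = u ∧ B.norm = v := by
  rcases eq_or_ne u 0 with rfl | hu
  · rcases eq_or_ne v 0 with rfl | hv
    · exact ⟨0, 0, by simpa [norm_eq_zero] using h, norm_zero, norm_zero⟩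
    · obtain ⟨B, A, hα, hB, hA⟩ := exists_factors_of_norm_eq_mul_of_ne_zero hv
        (h.trans (mul_comm _ _)) fun p hp hpv hpu => hprim p hp hpu hpv
      exact ⟨A, B, hα.trans (mul_comm _ _), hA, hB⟩
  · exact exists_factors_of_norm_eq_mul_of_ne_zero hu h hprim

end GaussianInt

theorem Int.sq_emod_four_eq_zero_or_one (a : ℤ) : a ^ 2 % 4 = 0 ∨ a ^ 2 % 4 = 1 := by
  rcases Int.even_or_odd a with ⟨k, rfl⟩ | ha
  · left
    rw [show (k + k) ^ 2 = 4 * k ^ 2 by ring, Int.mul_emod_right]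
  · exact Or.inr (Int.sq_mod_four_eq_one_of_odd ha)

theorem Int.even_or_even_of_sq_add_sq_add_sq_eq_sq {a b c ℓ : ℤ}
    (h : a ^ 2 + b ^ 2 + c ^ 2 = ℓ ^ 2) : Even a ∨ Even b := by
  by_contra! hab
  have ha := Int.sq_mod_four_eq_one_of_odd (Int.not_even_iff_odd.1 hab.1)
  have hb := Int.sq_mod_four_eq_one_of_odd (Int.not_even_iff_odd.1 hab.2)
  have hc := Int.sq_emod_four_eq_zero_or_one c
  have hℓ := Int.sq_emod_four_eq_zero_or_one ℓ
  omega

theorem exists_perm_even_even_of_sq_add_sq_add_sq_eq_sq {n : Fin 3 → ℤ} {ℓ : ℤ}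
    (h : n 0 ^ 2 + n 1 ^ 2 + n 2 ^ 2 = ℓ ^ 2) :
    ∃ σ : Equiv.Perm (Fin 3), Even (n (σ 0)) ∧ Even (n (σ 1)) := by
  rcases Int.even_or_even_of_sq_add_sq_add_sq_eq_sq h with h0 | h1
  · rcases Int.even_or_even_of_sq_add_sq_add_sq_eq_sq
      (show n 1 ^ 2 + n 2 ^ 2 + n 0 ^ 2 = ℓ ^ 2 by linear_combination h) with h1 | h2
    · exact ⟨1, h0, h1⟩
    · exact ⟨Equiv.swap 1 2, h0, h2⟩
  · rcases Int.even_or_even_of_sq_add_sq_add_sq_eq_sq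
      (show n 0 ^ 2 + n 2 ^ 2 + n 1 ^ 2 = ℓ ^ 2 by linear_combination h) with h0 | h2
    · exact ⟨1, h0, h1⟩
    · exact ⟨Equiv.swap 0 2, h2, h1⟩

theorem exists_param_of_sq_add_sq_add_sq_eq_sq {a b c ℓ : ℤ} (hℓ : 0 ≤ ℓ)
    (h : a ^ 2 + b ^ 2 + c ^ 2 = ℓ ^ 2) (ha : Even a) (hb : Even b)
    (hprim : ∀ d : ℤ, d ∣ a → d ∣ b → d ∣ c → IsUnit d) :
    ∃ x y z t : ℤ, a = 2 * (z * y - t * x) ∧ b = 2 * (t * z + y * x) ∧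
      c = z ^ 2 - t ^ 2 + x ^ 2 - y ^ 2 ∧ ℓ = x ^ 2 + y ^ 2 + z ^ 2 + t ^ 2 := by
  obtain ⟨a, rfl⟩ := ha
  obtain ⟨b, rfl⟩ := hb
  obtain ⟨u, hu⟩ : Even (ℓ + c) := by
    have hsq : ℓ ^ 2 = c ^ 2 + 2 * (2 * (a ^ 2 + b ^ 2)) := by linear_combination -h
    exact Int.even_add.2 (by simpa [parity_simps] using congrArg Even hsq)
  obtain ⟨v, rfl⟩ : ∃ v, ℓ = u + v := ⟨ℓ - u, by ring⟩
  obtain rfl : c = u - v := by linarith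
  have hcℓ := abs_le_of_sq_le_sq' (show (u - v) ^ 2 ≤ (u + v) ^ 2 by nlinarith) hℓ
  lift u to ℕ using (by linarith)
  lift v to ℕ using (by linarith)
  have hprim' : ∀ p : ℕ, p.Prime → p ∣ u → p ∣ v → ¬(p : ℤ[i]) ∣ ⟨a, b⟩ := by
    intro p hp hpu hpv hpα
    rw [← Int.cast_natCast, intCast_dvd] at hpα
    have := hprim p (dvd_add hpα.1 hpα.1) (dvd_add hpα.2 hpα.2)
      (dvd_sub (Int.natCast_dvd_natCast.2 hpu) (Int.natCast_dvd_natCast.2 hpv))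
    exact hp.ne_one (by simpa [Int.isUnit_iff_natAbs_eq] using this)
  obtain ⟨⟨z, x⟩, ⟨y, t⟩, hα, hA, hB⟩ :=
    GaussianInt.exists_factors_of_norm_eq_mul (by rw [norm_def]; linarith) hprim'
  have hre := congrArg Zsqrtd.re hα
  have him := congrArg Zsqrtd.im hα
  simp only [re_mul, im_mul, norm_def] at hre him hA hB
  exact ⟨x, y, z, t, by linear_combination 2 * hre, by linear_combination 2 * him,
    by linear_combination hB - hA, by linear_combination -hA - hB⟩

theorem stmt_5 (n : Fin 3 → ℤ) (ℓ : ℤ) (hℓ : 0 ≤ ℓ)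
    (h : (n 0) ^ 2 + (n 1) ^ 2 + (n 2) ^ 2 = ℓ ^ 2)
    (hprim : Int.gcd (Int.gcd (n 0) (n 1)) (n 2) = 1) :
    ∃ (σ : Equiv.Perm (Fin 3)) (ε : Fin 3 → ℤ), (∀ i, ε i = 1 ∨ ε i = -1) ∧
      ∃ x y z t : ℤ,
        ε 0 * n (σ 0) = 2 * (z * y - t * x) ∧
        ε 1 * n (σ 1) = 2 * (t * z + y * x) ∧
        ε 2 * n (σ 2) = z ^ 2 - t ^ 2 + x ^ 2 - y ^ 2 ∧
        ℓ = x ^ 2 + y ^ 2 + z ^ 2 + t ^ 2 := by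
  obtain ⟨σ, h0, h1⟩ := exists_perm_even_even_of_sq_add_sq_add_sq_eq_sq h
  have hσ : n (σ 0) ^ 2 + n (σ 1) ^ 2 + n (σ 2) ^ 2 = ℓ ^ 2 := by
    rw [← h]
    simpa [Fin.sum_univ_three] using Equiv.sum_comp σ (fun i => n i ^ 2)
  have hprimσ : ∀ d : ℤ, d ∣ n (σ 0) → d ∣ n (σ 1) → d ∣ n (σ 2) → IsUnit d := by
    intro d hd0 hd1 hd2
    have hd : ∀ i, d ∣ n i := fun i => by
      obtain ⟨j, rfl⟩ := σ.surjective i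
      fin_cases j <;> assumption
    have := Int.dvd_coe_gcd (Int.dvd_coe_gcd (hd 0) (hd 1)) (hd 2)
    rw [hprim, Nat.cast_one] at this
    exact isUnit_of_dvd_one this
  obtain ⟨x, y, z, t, ha, hb, hc, hsum⟩ :=
    exists_param_of_sq_add_sq_add_sq_eq_sq hℓ hσ h0 h1 hprimσ
  exact ⟨σ, 1, fun _ => Or.inl rfl, x, y, z, t, by simpa using ha, by simpa using hb,
    by simpa using hc, hsum⟩
end

section
/- A positive integer ℓ is the squared side-length of a lattice square in Z^3 (i.e., there exist two orthogonal integer vectors in Z^3 each of squared norm ℓ) if and only if ℓ is a sum of two squares. -/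
/-!
Write `zⱼ = uⱼ + i vⱼ`. The twin-pair conditions say exactly `z₀² + z₁² + z₂² = 0`, so with
`P = |z₀ + i z₁|²`, `Q = |z₀ - i z₁|²` and `R = |z₂|²` we get `P Q = |z₀² + z₁²|² = R²`, while
`P + Q + 2R = 2(|z₀|² + |z₁|² + |z₂|²) = 4ℓ`. Hence `4ℓP = (P + R)²`: the product of `ℓ` with the
nonzero sum of two squares `4P` (or `4Q`) is a square, and by the prime-factorisation criterion
for sums of two squares `ℓ` is one itself. Conversely `(a, b, 0), (-b, a, 0)` is a twin pair.
-/

theorem Nat.exists_sq_add_sq_of_mul_eq_sq {n m k : ℕ} (hm : m ≠ 0)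
    (hm' : ∃ x y, m = x ^ 2 + y ^ 2) (h : n * m = k ^ 2) : ∃ x y, n = x ^ 2 + y ^ 2 := by
  rcases eq_or_ne n 0 with rfl | hn
  · exact ⟨0, 0, rfl⟩
  rw [Nat.eq_sq_add_sq_iff] at hm' ⊢
  intro q hq hq3
  have : Fact q.Prime := ⟨Nat.prime_of_mem_primeFactors hq⟩
  have hval : padicValNat q n + padicValNat q m = 2 * padicValNat q k := by
    rw [← padicValNat.mul hn hm, h, padicValNat.pow]
  have hm_even : Even (padicValNat q m) := by
    by_cases hqm : q ∣ m
    · exact hm' q (Nat.mem_primeFactors.mpr ⟨Fact.out, hqm, hm⟩) hq3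
    · simp [padicValNat.eq_zero_of_not_dvd hqm]
  exact (Nat.even_add.mp (hval ▸ even_two_mul _)).mpr hm_even

theorem Int.exists_sq_add_sq_of_mul_eq_sq {n m k : ℤ} (hm : m ≠ 0)
    (hm' : ∃ x y, m = x ^ 2 + y ^ 2) (h : n * m = k ^ 2) : ∃ x y, n = x ^ 2 + y ^ 2 := by
  obtain ⟨x, y, rfl⟩ := hm'
  have hn : 0 ≤ n :=
    nonneg_of_mul_nonneg_left (h ▸ sq_nonneg k) (lt_of_le_of_ne (by positivity) hm.symm)
  obtain ⟨a, b, hab⟩ := Nat.exists_sq_add_sq_of_mul_eq_sq (Int.natAbs_ne_zero.mpr hm)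
    ⟨x.natAbs, y.natAbs, by zify; rw [abs_of_nonneg (by positivity), sq_abs, sq_abs]⟩
    (by rw [← Int.natAbs_mul, h, Int.natAbs_pow])
  exact ⟨a, b, by rw [← Int.natAbs_of_nonneg hn, hab]; push_cast; rfl⟩

theorem mul_sq_add_sq_eq_sq_of_twin {ℓ a b c d e f : ℤ} (hu : a ^ 2 + b ^ 2 + c ^ 2 = ℓ)
    (hv : d ^ 2 + e ^ 2 + f ^ 2 = ℓ) (huv : a * d + b * e + c * f = 0) :
    ℓ * ((2 * (a - e)) ^ 2 + (2 * (b + d)) ^ 2) =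
      ((a - e) ^ 2 + (b + d) ^ 2 + c ^ 2 + f ^ 2) ^ 2 := by
  linear_combination
    (a ^ 2 + b ^ 2 - c ^ 2 - d ^ 2 - e ^ 2 + f ^ 2 - 2 * ((a - e) ^ 2 + (b + d) ^ 2)) * hu
    - (a ^ 2 + b ^ 2 - c ^ 2 - d ^ 2 - e ^ 2 + f ^ 2 + 2 * ((a - e) ^ 2 + (b + d) ^ 2)) * hv
    + 4 * (a * d + b * e - c * f) * huv

theorem exists_mul_eq_sq_of_twin {ℓ a b c d e f : ℤ} (hℓ : 0 < ℓ)
    (hu : a ^ 2 + b ^ 2 + c ^ 2 = ℓ) (hv : d ^ 2 + e ^ 2 + f ^ 2 = ℓ)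
    (huv : a * d + b * e + c * f = 0) :
    ∃ m k : ℤ, m ≠ 0 ∧ (∃ x y, m = x ^ 2 + y ^ 2) ∧ ℓ * m = k ^ 2 := by
  by_cases hP : (a - e) ^ 2 + (b + d) ^ 2 = 0
  · -- Negating `b` and `e` turns `P` into `Q`.
    refine ⟨_, _, ?_, ⟨_, _, rfl⟩, mul_sq_add_sq_eq_sq_of_twin (a := a) (b := -b) (c := c)
      (d := d) (e := -e) (f := f) (by linear_combination hu) (by linear_combination hv)
      (by linear_combination huv)⟩
    -- `P = Q = 0` puts `u` and `v` on the third axis, where they cannot be orthogonal.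
    intro hQ
    have h0 : a ^ 2 + b ^ 2 + d ^ 2 + e ^ 2 = 0 := by linarith
    obtain rfl : a = 0 := by nlinarith
    obtain rfl : b = 0 := by nlinarith
    obtain rfl : d = 0 := by nlinarith
    obtain rfl : e = 0 := by nlinarith
    nlinarith
  · exact ⟨_, _, fun h ↦ hP (by linarith), ⟨_, _, rfl⟩, mul_sq_add_sq_eq_sq_of_twin hu hv huv⟩

theorem stmt_6 (ℓ : ℤ) (hℓ : 0 < ℓ) :
    (∃ u v : Fin 3 → ℤ,
        (u 0) ^ 2 + (u 1) ^ 2 + (u 2) ^ 2 = ℓ ∧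
        (v 0) ^ 2 + (v 1) ^ 2 + (v 2) ^ 2 = ℓ ∧
        u 0 * v 0 + u 1 * v 1 + u 2 * v 2 = 0) ↔
    ∃ a b : ℤ, ℓ = a ^ 2 + b ^ 2 := by
  constructor
  · rintro ⟨u, v, hu, hv, huv⟩
    obtain ⟨m, k, hm, hm', hk⟩ := exists_mul_eq_sq_of_twin hℓ hu hv huv
    exact Int.exists_sq_add_sq_of_mul_eq_sq hm hm' hk
  · rintro ⟨a, b, rfl⟩
    exact ⟨![a, b, 0], ![-b, a, 0], by simp, by simp [add_comm], by simp [mul_comm]⟩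
end

section
/- If u, v in Z^4 satisfy |u|^2 = |v|^2 = ℓ > 0 and u·v = 0, then with Δ_{ij} = (-1)^{i-j}(u_i v_j - u_j v_i), one has ℓ^2 = (Δ_{12}+Δ_{34})^2 + (Δ_{13}-Δ_{24})^2 + (Δ_{14}+Δ_{23})^2 and also ℓ^2 = (Δ_{12}-Δ_{34})^2 + (Δ_{13}+Δ_{24})^2 + (Δ_{14}-Δ_{23})^2. -/
/-!
Write `p i j = u i * v j - u j * v i` for the Plücker coordinates of the pair `u, v`; the `Δ`s
agree with them up to sign. Lagrange's identity gives `Σ p i j ^ 2 = |u|²|v|² - (u·v)² = ℓ²`, and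
the Plücker relation `p 0 1 * p 2 3 - p 0 2 * p 1 3 + p 0 3 * p 1 2 = 0` says exactly that the
cross terms of the two sums of three squares cancel, so each of them equals `Σ Δ ^ 2 = ℓ²`.
-/

section PluckerCoordinates

variable {ι R : Type*} [CommRing R]

def pluckerCoord (u v : ι → R) (i j : ι) : R := u i * v j - u j * v i

variable (u v : Fin 4 → R)

theorem lagrange_identity_fin_four :
    (u 0 ^ 2 + u 1 ^ 2 + u 2 ^ 2 + u 3 ^ 2) * (v 0 ^ 2 + v 1 ^ 2 + v 2 ^ 2 + v 3 ^ 2)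
        - (u 0 * v 0 + u 1 * v 1 + u 2 * v 2 + u 3 * v 3) ^ 2 =
      pluckerCoord u v 0 1 ^ 2 + pluckerCoord u v 0 2 ^ 2 + pluckerCoord u v 0 3 ^ 2
        + pluckerCoord u v 1 2 ^ 2 + pluckerCoord u v 1 3 ^ 2 + pluckerCoord u v 2 3 ^ 2 := by
  simp only [pluckerCoord]
  ring

theorem plucker_relation_fin_four :
    pluckerCoord u v 0 1 * pluckerCoord u v 2 3 - pluckerCoord u v 0 2 * pluckerCoord u v 1 3
      + pluckerCoord u v 0 3 * pluckerCoord u v 1 2 = 0 := by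
  simp only [pluckerCoord]
  ring

end PluckerCoordinates

theorem sum_three_sq_eq_sum_six_sq_of_plucker {R : Type*} [CommRing R] {a b c d e f : R}
    (h : a * f - b * e + c * d = 0) :
    (a + f) ^ 2 + (b - e) ^ 2 + (c + d) ^ 2 = a ^ 2 + b ^ 2 + c ^ 2 + d ^ 2 + e ^ 2 + f ^ 2 ∧
      (a - f) ^ 2 + (b + e) ^ 2 + (c - d) ^ 2 = a ^ 2 + b ^ 2 + c ^ 2 + d ^ 2 + e ^ 2 + f ^ 2 :=
  ⟨by linear_combination 2 * h, by linear_combination -2 * h⟩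

theorem stmt_11_general (u v : Fin 4 → ℤ) (ℓ : ℤ)
    (hu : (u 0) ^ 2 + (u 1) ^ 2 + (u 2) ^ 2 + (u 3) ^ 2 = ℓ)
    (hv : (v 0) ^ 2 + (v 1) ^ 2 + (v 2) ^ 2 + (v 3) ^ 2 = ℓ)
    (huv : u 0 * v 0 + u 1 * v 1 + u 2 * v 2 + u 3 * v 3 = 0)
    (Δ12 Δ13 Δ14 Δ23 Δ24 Δ34 : ℤ)
    (h12 : Δ12 = -(u 0 * v 1 - u 1 * v 0))
    (h13 : Δ13 = (u 0 * v 2 - u 2 * v 0))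
    (h14 : Δ14 = -(u 0 * v 3 - u 3 * v 0))
    (h23 : Δ23 = -(u 1 * v 2 - u 2 * v 1))
    (h24 : Δ24 = (u 1 * v 3 - u 3 * v 1))
    (h34 : Δ34 = -(u 2 * v 3 - u 3 * v 2)) :
    ℓ ^ 2 = (Δ12 + Δ34) ^ 2 + (Δ13 - Δ24) ^ 2 + (Δ14 + Δ23) ^ 2 ∧
    ℓ ^ 2 = (Δ12 - Δ34) ^ 2 + (Δ13 + Δ24) ^ 2 + (Δ14 - Δ23) ^ 2 := by
  have hsum : Δ12 ^ 2 + Δ13 ^ 2 + Δ14 ^ 2 + Δ23 ^ 2 + Δ24 ^ 2 + Δ34 ^ 2 = ℓ ^ 2 := by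
    have hlagrange := lagrange_identity_fin_four u v
    rw [hu, hv, huv] at hlagrange
    simp only [pluckerCoord] at hlagrange
    subst h12 h13 h14 h23 h24 h34
    linear_combination -hlagrange
  have hplucker : Δ12 * Δ34 - Δ13 * Δ24 + Δ14 * Δ23 = 0 := by
    have hrelation := plucker_relation_fin_four u v
    simp only [pluckerCoord] at hrelation
    subst h12 h13 h14 h23 h24 h34
    linear_combination hrelation
  obtain ⟨hplus, hminus⟩ := sum_three_sq_eq_sum_six_sq_of_plucker hplucker
  exact ⟨by rw [hplus, hsum], by rw [hminus, hsum]⟩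

theorem stmt_11 (u v : Fin 4 → ℤ) (ℓ : ℤ) (hℓ : 0 < ℓ)
    (hu : (u 0) ^ 2 + (u 1) ^ 2 + (u 2) ^ 2 + (u 3) ^ 2 = ℓ)
    (hv : (v 0) ^ 2 + (v 1) ^ 2 + (v 2) ^ 2 + (v 3) ^ 2 = ℓ)
    (huv : u 0 * v 0 + u 1 * v 1 + u 2 * v 2 + u 3 * v 3 = 0)
    (Δ12 Δ13 Δ14 Δ23 Δ24 Δ34 : ℤ)
    (h12 : Δ12 = -(u 0 * v 1 - u 1 * v 0))
    (h13 : Δ13 = (u 0 * v 2 - u 2 * v 0))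
    (h14 : Δ14 = -(u 0 * v 3 - u 3 * v 0))
    (h23 : Δ23 = -(u 1 * v 2 - u 2 * v 1))
    (h24 : Δ24 = (u 1 * v 3 - u 3 * v 1))
    (h34 : Δ34 = -(u 2 * v 3 - u 3 * v 2)) :
    ℓ ^ 2 = (Δ12 + Δ34) ^ 2 + (Δ13 - Δ24) ^ 2 + (Δ14 + Δ23) ^ 2 ∧
    ℓ ^ 2 = (Δ12 - Δ34) ^ 2 + (Δ13 + Δ24) ^ 2 + (Δ14 - Δ23) ^ 2 :=
  stmt_11_general u v ℓ hu hv huv Δ12 Δ13 Δ14 Δ23 Δ24 Δ34 h12 h13 h14 h23 h24 h34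
end

section
/- For integer quaternions, if q = x+yi+zj+tk and all three of n_1 = 2(xz+yt), n_2 = 2(zt-xy), n_3 = x^2 - y^2 - z^2 + t^2 are divisible by an integer n > 1, then q factors as q = q̃·η in the integer quaternions, where η ∈ {1+i, 1+j, α+βk} for some integers α, β with α^2+β^2 > 1. -/
/-!
Write `q = x + y i + z j + t k` as `ι u + i ι v` with `u = x + t I`, `v = y - z I` Gaussian
integers and `ι (a + b I) = a + b k`. Then `2 u v̄ = -n₂ + n₁ I` and `u ū - v v̄ = n₃`, and
right multiplication of `q` by `ι g` multiplies both `u` and `v` by `g`.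

If `u` and `v` have a common non-unit factor `g`, then `q = q̃ · ι g`. Otherwise, an odd `n`
would divide `u v̄`, `ū v` and `u ū - v v̄`, which forces `n` to be a unit when `u, v` are
coprime. So `n` is even, `x + y + z + t` is even, and since `1 + I` does not divide both `u`
and `v`, the parities of `x, y, z, t` make `q` right divisible by `1 + i` or `1 + j`.
-/

theorem one_eq_zero_of_isCoprime_of_cross_mul_eq_zero {R : Type*} [CommRing R] {u v u' v' : R}
    (huv : IsCoprime u v) (huv' : IsCoprime u' v')
    (h₁ : u * v' = 0) (h₂ : u' * v = 0) (h₃ : u * u' = v * v') : (1 : R) = 0 := by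
  obtain ⟨r, s, hrs⟩ := huv
  obtain ⟨r', s', hrs'⟩ := huv'
  -- `u u'` is nilpotent, yet `(r r' + s s') u u' = 1`.
  have hsq : (u * u') ^ 2 = 0 := by linear_combination (u * u') * h₃ + u' * v * h₁
  have hone : 1 = (r * r' + s * s') * (u * u') := by
    linear_combination
      -(r' * u' + s' * v') * hrs - hrs' + r * s' * h₁ + s * r' * h₂ - s * s' * h₃
  linear_combination (1 + (r * r' + s * s') * (u * u')) * hone + (r * r' + s * s') ^ 2 * hsq

theorem isUnit_of_dvd_cross_mul {R : Type*} [CommRing R] {m u v u' v' : R}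
    (huv : IsCoprime u v) (huv' : IsCoprime u' v')
    (h₁ : m ∣ u * v') (h₂ : m ∣ u' * v) (h₃ : m ∣ u * u' - v * v') : IsUnit m := by
  let f := Ideal.Quotient.mk (Ideal.span {m})
  have hf {w : R} (h : m ∣ w) : f w = 0 := (Ideal.Quotient.eq_zero_iff_dvd m w).mpr h
  refine isUnit_of_dvd_one ((Ideal.Quotient.eq_zero_iff_dvd m 1).mp ?_)
  rw [map_one]
  refine one_eq_zero_of_isCoprime_of_cross_mul_eq_zero (huv.map f) (huv'.map f)
    (by simpa using hf h₁) (by simpa using hf h₂) ?_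
  simpa [sub_eq_zero] using hf h₃

namespace GaussianInt

theorem not_isCoprime_of_intCast_dvd {m : ℤ} (hm : ¬IsUnit m) {u v : GaussianInt}
    (h₁ : (m : GaussianInt) ∣ u * star v) (h₃ : (m : GaussianInt) ∣ u * star u - v * star v) :
    ¬IsCoprime u v := by
  intro huv
  have h₂ : (m : GaussianInt) ∣ star u * v := by
    simpa [starRingEnd_apply, mul_comm] using map_dvd (starRingEnd GaussianInt) h₁
  have hunit := isUnit_of_dvd_cross_mul huv (huv.map (starRingEnd GaussianInt)) h₁ h₂ h₃
  exact hm (isUnit_of_dvd_one ((Zsqrtd.intCast_dvd_intCast m 1).mp (by simpa using hunit.dvd)))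

theorem exists_dvd_dvd_one_lt_norm {u v : GaussianInt} (huv : ¬IsCoprime u v) :
    ∃ g : GaussianInt, 1 < g.norm ∧ g ∣ u ∧ g ∣ v := by
  by_cases h0 : u = 0 ∧ v = 0
  · exact ⟨⟨1, 1⟩, by decide, h0.1 ▸ dvd_zero _, h0.2 ▸ dvd_zero _⟩
  contrapose! huv
  refine isCoprime_of_prime_dvd h0 fun g hg hgu => huv g ?_ hgu
  have hg0 : g.norm ≠ 0 := mt norm_eq_zero.mp hg.ne_zero
  have hg1 : g.norm ≠ 1 := mt (Zsqrtd.norm_eq_one_iff' (by norm_num) g).mp hg.not_isUnit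
  have := norm_nonneg g
  omega

theorem one_add_I_dvd {a b : ℤ} (h : 2 ∣ a - b) : (⟨1, 1⟩ : GaussianInt) ∣ ⟨a, b⟩ := by
  obtain ⟨c, hc⟩ := h
  exact ⟨⟨b + c, -c⟩, by ext <;> simp; omega⟩

end GaussianInt

theorem two_dvd_of_isCoprime {x y z t n : ℤ} (hn : 1 < n)
    (h1 : n ∣ 2 * (x * z + y * t)) (h2 : n ∣ 2 * (z * t - x * y))
    (h3 : n ∣ x ^ 2 - y ^ 2 - z ^ 2 + t ^ 2)
    (hcop : IsCoprime (⟨x, t⟩ : GaussianInt) ⟨y, -z⟩) : 2 ∣ n := by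
  have hcross : (⟨x, t⟩ * star ⟨y, -z⟩ : GaussianInt) = ⟨-(z * t - x * y), x * z + y * t⟩ := by
    ext <;> simp <;> ring
  have hnorm : (⟨x, t⟩ * star ⟨x, t⟩ - ⟨y, -z⟩ * star ⟨y, -z⟩ : GaussianInt) =
      ⟨x ^ 2 - y ^ 2 - z ^ 2 + t ^ 2, 0⟩ := by
    ext <;> simp <;> ring
  by_contra h2n
  have hodd : IsCoprime n 2 := (Int.prime_two.coprime_iff_not_dvd.mpr h2n).symm
  refine GaussianInt.not_isCoprime_of_intCast_dvd (m := n) (by rw [Int.isUnit_iff]; omega)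
    ?_ ?_ hcop
  · rw [hcross, Zsqrtd.intCast_dvd]
    exact ⟨(hodd.dvd_of_dvd_mul_left h2).neg_right, hodd.dvd_of_dvd_mul_left h1⟩
  · rw [hnorm, Zsqrtd.intCast_dvd]
    exact ⟨h3, dvd_zero n⟩

theorem parity_of_isCoprime {x y z t : ℤ} (hcop : IsCoprime (⟨x, t⟩ : GaussianInt) ⟨y, -z⟩)
    (h : 2 ∣ x ^ 2 - y ^ 2 - z ^ 2 + t ^ 2) :
    (2 ∣ x - y ∧ 2 ∣ z - t) ∨ (2 ∣ x - z ∧ 2 ∣ y - t) := by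
  have h1I : ¬IsUnit (⟨1, 1⟩ : GaussianInt) := by
    rw [← Zsqrtd.norm_eq_one_iff' (by norm_num)]
    decide
  have hxt : ¬(2 ∣ x - t ∧ 2 ∣ y - -z) := fun ⟨hxt, hyz⟩ =>
    h1I (hcop.isUnit_of_dvd' (GaussianInt.one_add_I_dvd hxt) (GaussianInt.one_add_I_dvd hyz))
  have hsq (a : ℤ) : 2 ∣ a ^ 2 - a := by
    rw [show a ^ 2 - a = a * (a - 1) by ring]
    exact (Int.even_mul_pred_self a).two_dvd
  have := hsq x
  have := hsq y
  have := hsq z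
  have := hsq t
  omega

namespace Quaternion

-- `⟨…⟩` elaborates in `QuaternionAlgebra ℤ (-1) 0 (-1)`, where the `Quaternion` simp lemmas do
-- not apply, so products are expanded with `QuaternionAlgebra.mk_mul_mk`.

theorem exists_mul_one_add_i_eq {x y z t : ℤ} (hxy : 2 ∣ x - y) (hzt : 2 ∣ z - t) :
    ∃ q : Quaternion ℤ, q * ⟨1, 1, 0, 0⟩ = ⟨x, y, z, t⟩ := by
  obtain ⟨c, hc⟩ := hxy
  obtain ⟨d, hd⟩ := hzt
  refine ⟨⟨y + c, -c, d, t + d⟩, (QuaternionAlgebra.mk_mul_mk ..).trans ?_⟩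
  simp only [QuaternionAlgebra.mk.injEq]
  omega

theorem exists_mul_one_add_j_eq {x y z t : ℤ} (hxz : 2 ∣ x - z) (hyt : 2 ∣ y - t) :
    ∃ q : Quaternion ℤ, q * ⟨1, 0, 1, 0⟩ = ⟨x, y, z, t⟩ := by
  obtain ⟨c, hc⟩ := hxz
  obtain ⟨d, hd⟩ := hyt
  refine ⟨⟨z + c, t + d, -c, -d⟩, (QuaternionAlgebra.mk_mul_mk ..).trans ?_⟩
  simp only [QuaternionAlgebra.mk.injEq]
  omega

theorem exists_mul_eq_of_dvd {x y z t : ℤ} {g : GaussianInt}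
    (hu : g ∣ ⟨x, t⟩) (hv : g ∣ ⟨y, -z⟩) :
    ∃ q : Quaternion ℤ, q * ⟨g.re, 0, 0, g.im⟩ = ⟨x, y, z, t⟩ := by
  obtain ⟨a, ha⟩ := hu
  obtain ⟨b, hb⟩ := hv
  rw [Zsqrtd.ext_iff] at ha hb
  simp only [Zsqrtd.re_mul, Zsqrtd.im_mul] at ha hb
  refine ⟨⟨a.re, b.re, -b.im, a.im⟩, (QuaternionAlgebra.mk_mul_mk ..).trans ?_⟩
  simp only [QuaternionAlgebra.mk.injEq]
  refine ⟨?_, ?_, ?_, ?_⟩ <;> linarith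

end Quaternion

theorem stmt_15 (x y z t n : ℤ) (hn : 1 < n)
    (h1 : n ∣ 2 * (x*z + y*t)) (h2 : n ∣ 2 * (z*t - x*y))
    (h3 : n ∣ (x^2 - y^2 - z^2 + t^2))
    (q : Quaternion ℤ) (hq : q = ⟨x, y, z, t⟩) :
    ∃ (qt η : Quaternion ℤ),
      ((η = ⟨1, 1, 0, 0⟩) ∨ (η = ⟨1, 0, 1, 0⟩) ∨
        (∃ α β : ℤ, α ^ 2 + β ^ 2 > 1 ∧ η = ⟨α, 0, 0, β⟩)) ∧
      q = qt * η := by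
  subst hq
  by_cases hcop : IsCoprime (⟨x, t⟩ : GaussianInt) ⟨y, -z⟩
  · have h2n : 2 ∣ n := two_dvd_of_isCoprime hn h1 h2 h3 hcop
    rcases parity_of_isCoprime hcop (h2n.trans h3) with ⟨hxy, hzt⟩ | ⟨hxz, hyt⟩
    · obtain ⟨qt, hqt⟩ := Quaternion.exists_mul_one_add_i_eq hxy hzt
      exact ⟨qt, _, Or.inl rfl, hqt.symm⟩
    · obtain ⟨qt, hqt⟩ := Quaternion.exists_mul_one_add_j_eq hxz hyt
      exact ⟨qt, _, Or.inr (Or.inl rfl), hqt.symm⟩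
  · obtain ⟨g, hg, hgu, hgv⟩ := GaussianInt.exists_dvd_dvd_one_lt_norm hcop
    obtain ⟨qt, hqt⟩ := Quaternion.exists_mul_eq_of_dvd hgu hgv
    refine ⟨qt, _, Or.inr (Or.inr ⟨g.re, g.im, ?_, rfl⟩), hqt.symm⟩
    rw [Zsqrtd.norm_def] at hg
    linarith
end
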